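/- arXiv:1303.6532 — 2 statements merged into one kernel-verified Lean document; each statement's English description precedes it below -/
import Mathlib

section
/- If a bounded geometry metric space X has property A, then every ghost operator in the uniform Roe algebra C*_u(X) is compact. -/
/-!
Formalization of statements from "Ghostbusting and property A" (Roe–Willett).
`L2 X` is ℓ²(X) with complex coefficients, `diracDelta x` the Dirac basis vector δ_x,
`matrixEntry T x y = ⟨δ_x, T δ_y⟩`.
-/

noncomputable section

open Metric Set

/-- ℓ²(X) with complex coefficients. -/
abbrev L2 (X : Type*) := lp (fun _ : X => ℂ) 2

/-- The Dirac mass δ_x ∈ ℓ²(X). -/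
def diracDelta {X : Type*} (x : X) : L2 X :=
  letI := Classical.decEq X
  lp.single 2 x 1

/-- The matrix entry T_{xy} = ⟨δ_x, T δ_y⟩ of a bounded operator on ℓ²(X). -/
def matrixEntry {X : Type*} (T : L2 X →L[ℂ] L2 X) (x y : X) : ℂ :=
  inner ℂ (diracDelta x) (T (diracDelta y))

/-- A metric space has bounded geometry if for each `R > 0` there is a uniform
bound on the cardinality of all balls of radius `R`. -/
def BoundedGeometry (X : Type*) [MetricSpace X] : Prop :=
  ∀ R : ℝ, 0 < R → ∃ N : ℕ, ∀ x : X,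
    (Metric.closedBall x R).Finite ∧ (Metric.closedBall x R).ncard ≤ N

/-- `T` has propagation at most `R`: the matrix entries vanish whenever `d(x,y) > R`.
(`T ∈ ℂ_R[X]` in the notation of the paper.) -/
def HasPropagationLE {X : Type*} [MetricSpace X] (T : L2 X →L[ℂ] L2 X) (R : ℝ) : Prop :=
  ∀ x y : X, R < dist x y → matrixEntry T x y = 0

/-- The uniform Roe algebra C*_u(X): the operator-norm closure of the set of
finite propagation operators. -/
def UniformRoeAlgebra (X : Type*) [MetricSpace X] : Set (L2 X →L[ℂ] L2 X) :=
  closure {T | ∃ R : ℝ, 0 ≤ R ∧ HasPropagationLE T R}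

/-- `T` is a ghost: its matrix entries tend to 0 at infinity, i.e. for every `ε > 0`
all entries with at least one index outside some finite set have modulus `< ε`. -/
def IsGhost {X : Type*} [MetricSpace X] (T : L2 X →L[ℂ] L2 X) : Prop :=
  ∀ ε : ℝ, 0 < ε → ∃ F : Finset X, ∀ x y : X, (x ∉ F ∨ y ∉ F) → ‖matrixEntry T x y‖ < ε

/-- A positive definite kernel on `X × X`. -/
def IsPosDefKernel {X : Type*} (k : X → X → ℝ) : Prop :=
  ∀ (s : Finset X) (c : X → ℝ), 0 ≤ ∑ x ∈ s, ∑ y ∈ s, c x * c y * k x y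

/-- Property A, in the formulation via positive definite kernels:
there is a sequence of positive definite kernels of controlled support converging
to 1 uniformly on controlled sets. -/
def PropertyA (X : Type*) [MetricSpace X] : Prop :=
  ∃ k : ℕ → X → X → ℝ,
    (∀ n, IsPosDefKernel (k n)) ∧
    (∀ n, ∃ r : ℝ, ∀ x y : X, r < dist x y → k n x y = 0) ∧
    (∀ s : ℝ, 0 < s → ∀ ε : ℝ, 0 < ε → ∃ N : ℕ, ∀ n : ℕ, N < n → ∀ x y : X,
      dist x y < s → 1 - ε ≤ k n x y ∧ k n x y ≤ 1)

/-!
Property A provides positive definite kernels `k` of finite propagation that are uniformly close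
to `1` on controlled sets. A Gram factorization `k x y = ∑ i, b i x * b i y` writes the Schur
(entrywise) product `k ∘ T` as `∑ i, b i T b i` with diagonal `b i`, so Schur multiplication
by `k` is a contraction when `k ≤ 1` on the diagonal. For `T` in the uniform Roe algebra,
approximated by `S` of finite propagation, `(1 - k) ∘ S` is small by bounded geometry; hence
`k ∘ T` is close to `T`. The operator `k ∘ T` has finite propagation and, if `T` is a ghost,
entries tending to `0`; by bounded geometry it is then, up to `ε`, supported on a finite block
`G × G`. So `T` is within `ε` of the finite-rank operator `P_G T P_G`.
-/

open scoped ComplexConjugate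
open Finset Filter Topology

section

variable {X : Type*}

def kernelForm (m : X → X → ℂ) (s t : Finset X) (u v : X → ℂ) : ℂ :=
  ∑ x ∈ s, ∑ y ∈ t, conj (u x) * m x y * v y

def normOn (s : Finset X) (u : X → ℂ) : ℝ := √(∑ x ∈ s, ‖u x‖ ^ 2)

/-- `m` is the matrix of an operator on `ℓ²(X)` of norm at most `C`, tested on finitely
supported vectors. -/
def KernelNormLE (m : X → X → ℂ) (C : ℝ) : Prop :=
  ∀ s t u v, ‖kernelForm m s t u v‖ ≤ C * (normOn s u * normOn t v)

theorem normOn_nonneg (s : Finset X) (u : X → ℂ) : 0 ≤ normOn s u := Real.sqrt_nonneg _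

theorem normOn_sq (s : Finset X) (u : X → ℂ) : normOn s u ^ 2 = ∑ x ∈ s, ‖u x‖ ^ 2 :=
  Real.sq_sqrt (sum_nonneg fun _ _ => sq_nonneg _)

theorem normOn_mono {s s' : Finset X} (h : s ⊆ s') (u : X → ℂ) : normOn s u ≤ normOn s' u :=
  Real.sqrt_le_sqrt (sum_le_sum_of_subset_of_nonneg h fun _ _ _ => sq_nonneg _)

theorem kernelForm_add (m₁ m₂ : X → X → ℂ) (s t : Finset X) (u v : X → ℂ) :
    kernelForm (m₁ + m₂) s t u v = kernelForm m₁ s t u v + kernelForm m₂ s t u v := by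
  simp only [kernelForm, Pi.add_apply, mul_add, add_mul, sum_add_distrib]

theorem kernelForm_sub (m₁ m₂ : X → X → ℂ) (s t : Finset X) (u v : X → ℂ) :
    kernelForm (m₁ - m₂) s t u v = kernelForm m₁ s t u v - kernelForm m₂ s t u v := by
  simp only [kernelForm, Pi.sub_apply, mul_sub, sub_mul, sum_sub_distrib]

namespace KernelNormLE

variable {m m₁ m₂ : X → X → ℂ} {C C' C₁ C₂ : ℝ}

theorem mono (h : KernelNormLE m C) (hC : C ≤ C') : KernelNormLE m C' := fun s t u v =>
  (h s t u v).trans <| mul_le_mul_of_nonneg_right hC <|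
    mul_nonneg (normOn_nonneg _ _) (normOn_nonneg _ _)

theorem add (h₁ : KernelNormLE m₁ C₁) (h₂ : KernelNormLE m₂ C₂) :
    KernelNormLE (m₁ + m₂) (C₁ + C₂) := fun s t u v => by
  rw [kernelForm_add, add_mul]
  exact (norm_add_le _ _).trans (add_le_add (h₁ s t u v) (h₂ s t u v))

theorem sub (h₁ : KernelNormLE m₁ C₁) (h₂ : KernelNormLE m₂ C₂) :
    KernelNormLE (m₁ - m₂) (C₁ + C₂) := fun s t u v => by
  rw [kernelForm_sub, add_mul]
  exact (norm_sub_le _ _).trans (add_le_add (h₁ s t u v) (h₂ s t u v))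

end KernelNormLE

open Classical in
def offBlock (G : Finset X) (m : X → X → ℂ) (x y : X) : ℂ :=
  if x ∈ G ∧ y ∈ G then 0 else m x y

theorem offBlock_add (G : Finset X) (m₁ m₂ : X → X → ℂ) :
    offBlock G (m₁ + m₂) = offBlock G m₁ + offBlock G m₂ := by
  ext x y
  by_cases h : x ∈ G ∧ y ∈ G <;> simp [offBlock, h]

theorem kernelForm_offBlock [DecidableEq X] (G : Finset X) (m : X → X → ℂ) (s t : Finset X)
    (u v : X → ℂ) :
    kernelForm (offBlock G m) s t u v =
      kernelForm m s t u v - kernelForm m (s ∩ G) (t ∩ G) u v := by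
  simp only [kernelForm, offBlock, ← filter_mem_eq_inter, sum_filter, ← sum_sub_distrib]
  refine sum_congr rfl fun x _ => ?_
  by_cases hx : x ∈ G
  · simp only [hx, true_and, if_true, mul_ite, ite_mul, mul_zero, zero_mul, ← sum_sub_distrib]
    exact sum_congr rfl fun y _ => by split_ifs <;> simp
  · simp [hx]

theorem KernelNormLE.offBlock {m : X → X → ℂ} {C : ℝ} (h : KernelNormLE m C) (hC : 0 ≤ C)
    (G : Finset X) : KernelNormLE (offBlock G m) (2 * C) := fun s t u v => by
  classical
  have hsG := normOn_mono (s := s ∩ G) inter_subset_left u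
  have htG := normOn_mono (s := t ∩ G) inter_subset_left v
  rw [kernelForm_offBlock]
  calc _ ≤ C * (normOn s u * normOn t v) + C * (normOn (s ∩ G) u * normOn (t ∩ G) v) :=
        (norm_sub_le _ _).trans (add_le_add (h ..) (h ..))
    _ ≤ 2 * C * (normOn s u * normOn t v) := by
        have := mul_le_mul hsG htG (normOn_nonneg _ _) (normOn_nonneg _ _)
        nlinarith

def symmPart (k : X → X → ℝ) (x y : X) : ℝ := (k x y + k y x) / 2

theorem IsPosDefKernel.symmPart {k : X → X → ℝ} (hk : IsPosDefKernel k) :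
    IsPosDefKernel (symmPart k) := by
  intro s c
  have hswap : ∑ x ∈ s, ∑ y ∈ s, c x * c y * k y x = ∑ x ∈ s, ∑ y ∈ s, c x * c y * k x y := by
    rw [sum_comm]
    exact sum_congr rfl fun _ _ => sum_congr rfl fun _ _ => by ring
  have hsplit : ∑ x ∈ s, ∑ y ∈ s, c x * c y * _root_.symmPart k x y =
      (∑ x ∈ s, ∑ y ∈ s, c x * c y * k x y + ∑ x ∈ s, ∑ y ∈ s, c x * c y * k y x) / 2 := by
    simp only [_root_.symmPart, sum_div, ← sum_add_distrib]
    exact sum_congr rfl fun _ _ => sum_congr rfl fun _ _ => by ring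
  rw [hsplit, hswap]
  linarith [hk s c]

theorem IsPosDefKernel.exists_gram {k : X → X → ℝ} (hk : IsPosDefKernel k)
    (hsymm : ∀ x y, k x y = k y x) (F : Finset X) :
    ∃ b : F → X → ℝ, ∀ x ∈ F, ∀ y ∈ F, k x y = ∑ i, b i x * b i y := by
  classical
  let K : Matrix F F ℝ := .of fun i j => k i j
  have hK : K.PosSemidef := by
    refine Matrix.posSemidef_iff_dotProduct_mulVec.mpr ⟨?_, fun w => ?_⟩
    · ext i j
      exact hsymm j i
    · refine (hk F fun x => if h : x ∈ F then w ⟨x, h⟩ else 0).trans_eq ?_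
      simp only [← sum_coe_sort F, coe_mem, dif_pos, dotProduct, Matrix.mulVec, mul_sum, K,
        Matrix.of_apply, Pi.star_apply, star_trivial]
      exact sum_congr rfl fun i _ => sum_congr rfl fun j _ => by ring
  open MatrixOrder in
  obtain ⟨B, hB⟩ := CStarAlgebra.nonneg_iff_eq_star_mul_self.mp hK.nonneg
  refine ⟨fun i x => if h : x ∈ F then B i ⟨x, h⟩ else 0, fun x hx y hy => ?_⟩
  simpa [K, Matrix.mul_apply, hx, hy] using congr_fun₂ hB ⟨x, hx⟩ ⟨y, hy⟩

theorem IsPosDefKernel.abs_le_one {k : X → X → ℝ} (hk : IsPosDefKernel k)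
    (hsymm : ∀ x y, k x y = k y x) (hdiag : ∀ x, k x x ≤ 1) (x y : X) : |k x y| ≤ 1 := by
  classical
  rcases eq_or_ne x y with rfl | hxy
  · have := hk {x} fun _ => 1
    simp only [sum_singleton, one_mul] at this
    rw [abs_of_nonneg this]
    exact hdiag x
  · have key : ∀ a : ℝ, 0 ≤ k x x + 2 * a * k x y + a ^ 2 * k y y := fun a => by
      have := hk {x, y} fun z => if z = x then 1 else a
      simp only [sum_pair hxy, if_neg hxy.symm, hsymm y x, ↓reduceIte] at this
      linarith
    have h₁ := key 1
    have h₂ := key (-1)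
    cases abs_cases (k x y) <;> linarith [hdiag x, hdiag y]

theorem KernelNormLE.schurMul {k : X → X → ℝ} (hk : IsPosDefKernel k)
    (hsymm : ∀ x y, k x y = k y x) (hdiag : ∀ x, k x x ≤ 1) {m : X → X → ℂ} {C : ℝ}
    (hm : KernelNormLE m C) (hC : 0 ≤ C) : KernelNormLE (fun x y => k x y * m x y) C := by
  classical
  intro s t u v
  obtain ⟨b, hb⟩ := hk.exists_gram hsymm (s ∪ t)
  let bu : ↥(s ∪ t) → X → ℂ := fun i x => b i x * u x
  let bv : ↥(s ∪ t) → X → ℂ := fun i y => b i y * v y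
  have hform : kernelForm (fun x y => k x y * m x y) s t u v =
      ∑ i, kernelForm m s t (bu i) (bv i) := by
    simp only [kernelForm, bu, bv]
    rw [eq_comm, sum_comm]
    refine sum_congr rfl fun x hx => ?_
    rw [sum_comm]
    refine sum_congr rfl fun y hy => ?_
    rw [hb x (mem_union_left _ hx) y (mem_union_right _ hy)]
    push_cast
    simp only [map_mul, Complex.conj_ofReal, sum_mul, mul_sum]
    exact sum_congr rfl fun i _ => by ring
  have hnorm : ∀ r ⊆ s ∪ t, ∀ w : X → ℂ,
      √(∑ i, normOn r (fun x => b i x * w x) ^ 2) ≤ normOn r w := by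
    intro r hr w
    refine Real.sqrt_le_iff.2 ⟨normOn_nonneg _ _, ?_⟩
    simp only [normOn_sq, norm_mul, Complex.norm_real, Real.norm_eq_abs, mul_pow, sq_abs]
    rw [sum_comm]
    refine sum_le_sum fun x hx => ?_
    have : ∑ i, b i x ^ 2 ≤ 1 := by
      simpa only [sq, ← hb x (hr hx) x (hr hx)] using hdiag x
    rw [← sum_mul]
    nlinarith [sq_nonneg ‖w x‖]
  rw [hform]
  calc ‖∑ i, kernelForm m s t (bu i) (bv i)‖
      ≤ ∑ i, C * (normOn s (bu i) * normOn t (bv i)) :=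
        (norm_sum_le _ _).trans (sum_le_sum fun i _ => hm ..)
    _ = C * ∑ i, normOn s (bu i) * normOn t (bv i) := by rw [mul_sum]
    _ ≤ C * (√(∑ i, normOn s (bu i) ^ 2) * √(∑ i, normOn t (bv i) ^ 2)) := by
        gcongr
        exact Real.sum_mul_le_sqrt_mul_sqrt _ _ _
    _ ≤ C * (normOn s u * normOn t v) := by
        gcongr C * ?_
        exact mul_le_mul (hnorm s subset_union_left u) (hnorm t subset_union_right v)
          (Real.sqrt_nonneg _) (normOn_nonneg _ _)

section BoundedGeometry

variable [MetricSpace X] {r : ℝ} {N : ℕ}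

theorem BoundedGeometry.exists_ncard_closedBall_le (hbg : BoundedGeometry X) (r : ℝ) :
    ∃ N : ℕ, ∀ x : X, (closedBall x r).Finite ∧ (closedBall x r).ncard ≤ N := by
  obtain ⟨N, hN⟩ := hbg (max r 1) (by positivity)
  refine ⟨N, fun x => ?_⟩
  have hsub : closedBall x r ⊆ closedBall x (max r 1) :=
    closedBall_subset_closedBall (le_max_left _ _)
  exact ⟨(hN x).1.subset hsub, (ncard_le_ncard hsub (hN x).1).trans (hN x).2⟩

theorem card_filter_dist_le (hN : ∀ x : X, (closedBall x r).Finite ∧ (closedBall x r).ncard ≤ N)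
    (x : X) (t : Finset X) : #{y ∈ t | dist x y ≤ r} ≤ N := by
  obtain ⟨hfin, hcard⟩ := hN x
  calc #{y ∈ t | dist x y ≤ r} ≤ #hfin.toFinset :=
        card_le_card fun y hy => by simpa [dist_comm] using (mem_filter.1 hy).2
    _ = (closedBall x r).ncard := (ncard_eq_toFinset_card _ hfin).symm
    _ ≤ N := hcard

theorem sum_sum_ite_dist_le
    (hN : ∀ x : X, (closedBall x r).Finite ∧ (closedBall x r).ncard ≤ N)
    (s t : Finset X) {f : X → ℝ} (hf : ∀ x, 0 ≤ f x) :
    ∑ x ∈ s, ∑ y ∈ t, (if dist x y ≤ r then f x else 0) ≤ N * ∑ x ∈ s, f x := by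
  rw [mul_sum]
  refine sum_le_sum fun x _ => ?_
  rw [← sum_filter, sum_const, nsmul_eq_mul]
  exact mul_le_mul_of_nonneg_right (by exact_mod_cast card_filter_dist_le hN x t) (hf x)

/-- Schur test: by bounded geometry, each row and column of `m` has at most `N` nonzero
entries. -/
theorem kernelNormLE_of_propagation
    (hN : ∀ x : X, (closedBall x r).Finite ∧ (closedBall x r).ncard ≤ N) {c : ℝ} (hc : 0 ≤ c)
    {m : X → X → ℂ} (hprop : ∀ x y, r < dist x y → m x y = 0) (hbound : ∀ x y, ‖m x y‖ ≤ c) :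
    KernelNormLE m (N * c) := by
  intro s t u v
  let f : X × X → ℝ := fun p => if dist p.1 p.2 ≤ r then ‖u p.1‖ else 0
  let g : X × X → ℝ := fun p => if dist p.1 p.2 ≤ r then ‖v p.2‖ else 0
  have hentry : ∀ x y, ‖conj (u x) * m x y * v y‖ ≤ c * (f (x, y) * g (x, y)) := by
    intro x y
    by_cases hxy : dist x y ≤ r
    · simp only [f, g, hxy, if_true, norm_mul, RCLike.norm_conj]
      calc ‖u x‖ * ‖m x y‖ * ‖v y‖ ≤ ‖u x‖ * c * ‖v y‖ := by gcongr; exact hbound x y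
        _ = c * (‖u x‖ * ‖v y‖) := by ring
    · simp [f, g, hxy, hprop x y (not_le.1 hxy)]
  have hf : ∑ p ∈ s ×ˢ t, f p ^ 2 ≤ N * normOn s u ^ 2 := by
    rw [sum_product, normOn_sq]
    simpa only [f, ite_pow, zero_pow two_ne_zero] using
      sum_sum_ite_dist_le hN s t fun x => sq_nonneg ‖u x‖
  have hg : ∑ p ∈ s ×ˢ t, g p ^ 2 ≤ N * normOn t v ^ 2 := by
    rw [sum_product_right, normOn_sq]
    simpa only [g, ite_pow, zero_pow two_ne_zero, dist_comm] using
      sum_sum_ite_dist_le hN t s fun y => sq_nonneg ‖v y‖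
  have hsqrtN : √(N : ℝ) * √(N : ℝ) = N := Real.mul_self_sqrt (Nat.cast_nonneg N)
  calc ‖kernelForm m s t u v‖ ≤ ∑ x ∈ s, ∑ y ∈ t, c * (f (x, y) * g (x, y)) :=
        (norm_sum_le _ _).trans <| sum_le_sum fun x _ =>
          (norm_sum_le _ _).trans <| sum_le_sum fun y _ => hentry x y
    _ = c * ∑ p ∈ s ×ˢ t, f p * g p := by rw [sum_product, mul_sum]; simp_rw [mul_sum]
    _ ≤ c * (√(∑ p ∈ s ×ˢ t, f p ^ 2) * √(∑ p ∈ s ×ˢ t, g p ^ 2)) := by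
        gcongr
        exact Real.sum_mul_le_sqrt_mul_sqrt _ _ _
    _ ≤ c * (√(N * normOn s u ^ 2) * √(N * normOn t v ^ 2)) := by gcongr
    _ = N * c * (normOn s u * normOn t v) := by
        rw [Real.sqrt_mul (Nat.cast_nonneg N), Real.sqrt_mul (Nat.cast_nonneg N),
          Real.sqrt_sq (normOn_nonneg _ _), Real.sqrt_sq (normOn_nonneg _ _)]
        linear_combination c * normOn s u * normOn t v * hsqrtN

end BoundedGeometry

theorem inner_diracDelta_left (x : X) (f : L2 X) : inner ℂ (diracDelta x) f = f x := by
  classical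
  simp [diracDelta, lp.inner_single_left]

theorem diracDelta_apply [DecidableEq X] (x y : X) :
    diracDelta y x = if x = y then 1 else 0 := by
  simp [diracDelta, lp.single_apply, Pi.single_apply]

theorem norm_diracDelta (x : X) : ‖diracDelta x‖ = 1 := by
  classical
  simpa only [diracDelta, norm_one] using lp.norm_single (E := fun _ : X => ℂ) two_pos x 1

theorem matrixEntry_eq_apply (T : L2 X →L[ℂ] L2 X) (x y : X) :
    matrixEntry T x y = T (diracDelta y) x :=
  inner_diracDelta_left x _

theorem norm_matrixEntry_le (T : L2 X →L[ℂ] L2 X) (x y : X) : ‖matrixEntry T x y‖ ≤ ‖T‖ := by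
  calc ‖matrixEntry T x y‖ ≤ ‖diracDelta x‖ * ‖T (diracDelta y)‖ := norm_inner_le_norm _ _
    _ ≤ ‖diracDelta x‖ * (‖T‖ * ‖diracDelta y‖) := by gcongr; exact T.le_opNorm _
    _ = ‖T‖ := by rw [norm_diracDelta, norm_diracDelta, one_mul, mul_one]

theorem matrixEntry_sub (T S : L2 X →L[ℂ] L2 X) :
    matrixEntry (T - S) = matrixEntry T - matrixEntry S := by
  ext x y
  simp [matrixEntry]

def finVec (s : Finset X) (u : X → ℂ) : L2 X := ∑ x ∈ s, u x • diracDelta x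

theorem finVec_eq_sum_single [DecidableEq X] (s : Finset X) (u : X → ℂ) :
    finVec s u = ∑ x ∈ s, lp.single 2 x (u x) := by
  simp only [finVec, diracDelta, ← lp.single_smul, smul_eq_mul, mul_one]
  congr!

theorem finVec_apply [DecidableEq X] (s : Finset X) (u : X → ℂ) (x : X) :
    finVec s u x = if x ∈ s then u x else 0 := by
  rw [finVec_eq_sum_single, lp.coeFn_sum, Finset.sum_apply]
  simp [lp.single_apply]

theorem norm_finVec (s : Finset X) (u : X → ℂ) : ‖finVec s u‖ = normOn s u := by
  classical
  have h := lp.norm_sum_single (E := fun _ : X => ℂ) (p := 2) (by norm_num) u s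
  simp only [ENNReal.toReal_ofNat, Real.rpow_two, ← finVec_eq_sum_single] at h
  rw [normOn, ← h, Real.sqrt_sq (norm_nonneg _)]

theorem tendsto_finVec (f : L2 X) : Tendsto (fun s => finVec s f) atTop (𝓝 f) := by
  classical
  simp only [finVec_eq_sum_single]
  exact lp.hasSum_single ENNReal.ofNat_ne_top f

theorem inner_finVec_apply_finVec (T : L2 X →L[ℂ] L2 X) (s t : Finset X) (u v : X → ℂ) :
    inner ℂ (finVec s u) (T (finVec t v)) = kernelForm (matrixEntry T) s t u v := by
  simp only [finVec, map_sum, map_smul, sum_inner, inner_sum, inner_smul_left, inner_smul_right,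
    kernelForm, matrixEntry, mul_sum]
  rw [sum_comm]
  exact sum_congr rfl fun x _ => sum_congr rfl fun y _ => by ring

theorem kernelNormLE_matrixEntry (T : L2 X →L[ℂ] L2 X) : KernelNormLE (matrixEntry T) ‖T‖ := by
  intro s t u v
  rw [← inner_finVec_apply_finVec, ← norm_finVec, ← norm_finVec]
  calc _ ≤ ‖finVec s u‖ * ‖T (finVec t v)‖ := norm_inner_le_norm _ _
    _ ≤ ‖finVec s u‖ * (‖T‖ * ‖finVec t v‖) := by gcongr; exact T.le_opNorm _
    _ = ‖T‖ * (‖finVec s u‖ * ‖finVec t v‖) := by ring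

theorem norm_inner_le_of_kernelNormLE {T : L2 X →L[ℂ] L2 X} {C : ℝ}
    (h : KernelNormLE (matrixEntry T) C) (w f : L2 X) :
    ‖inner ℂ w (T f)‖ ≤ C * (‖w‖ * ‖f‖) := by
  have hw := tendsto_finVec w
  have hf := tendsto_finVec f
  refine le_of_tendsto_of_tendsto' ((hw.inner ((T.continuous.tendsto f).comp hf)).norm)
    ((hw.norm.mul hf.norm).const_mul C) fun s => ?_
  simpa only [Function.comp_apply, inner_finVec_apply_finVec, norm_finVec] using h s s w f

theorem opNorm_le_of_kernelNormLE {T : L2 X →L[ℂ] L2 X} {C : ℝ}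
    (h : KernelNormLE (matrixEntry T) C) (hC : 0 ≤ C) : ‖T‖ ≤ C := by
  refine T.opNorm_le_bound hC fun f => ?_
  have := norm_inner_le_of_kernelNormLE h (T f) f
  rw [inner_self_eq_norm_sq_to_K, norm_pow, RCLike.norm_ofReal, abs_norm, sq] at this
  rcases (norm_nonneg (T f)).eq_or_lt with h0 | hpos
  · rw [← h0]
    positivity
  · nlinarith

def coordProj (G : Finset X) : L2 X →L[ℂ] L2 X :=
  ∑ x ∈ G, ContinuousLinearMap.toSpanSingleton ℂ (diracDelta x) ∘L innerSL ℂ (diracDelta x)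

theorem coordProj_apply (G : Finset X) (f : L2 X) : coordProj G f = finVec G f := by
  simp [coordProj, finVec, inner_diracDelta_left]

theorem coordProj_diracDelta [DecidableEq X] (G : Finset X) (y : X) :
    coordProj G (diracDelta y) = if y ∈ G then diracDelta y else 0 := by
  simp [coordProj_apply, finVec, diracDelta_apply, ite_smul]

theorem isCompactOperator_coordProj (G : Finset X) : IsCompactOperator (coordProj G) := by
  rw [coordProj, FunLike.coe_sum]
  refine sum_induction _ IsCompactOperator (fun _ _ => IsCompactOperator.add)
    isCompactOperator_zero fun x _ => ?_
  rw [ContinuousLinearMap.coe_comp]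
  exact (isCompactOperator_of_locallyCompactSpace_dom _).clm_comp _

theorem matrixEntry_sub_coordProj_comp (G : Finset X) (T : L2 X →L[ℂ] L2 X) :
    matrixEntry (T - coordProj G ∘L T ∘L coordProj G) = offBlock G (matrixEntry T) := by
  classical
  ext x y
  rw [matrixEntry_sub, Pi.sub_apply, Pi.sub_apply, matrixEntry_eq_apply, matrixEntry_eq_apply,
    ContinuousLinearMap.comp_apply, ContinuousLinearMap.comp_apply, coordProj_apply,
    finVec_apply, coordProj_diracDelta]
  by_cases hx : x ∈ G <;> by_cases hy : y ∈ G <;> simp [offBlock, hx, hy, matrixEntry_eq_apply]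

section PropertyA

variable [MetricSpace X]

theorem PropertyA.exists_kernel (hA : PropertyA X) {R δ : ℝ} (hR : 0 < R) (hδ : 0 < δ) :
    ∃ k : X → X → ℝ, IsPosDefKernel k ∧ (∀ x y, k x y = k y x) ∧
      (∃ r, ∀ x y, r < dist x y → k x y = 0) ∧
      ∀ x y, dist x y < R → 1 - δ ≤ k x y ∧ k x y ≤ 1 := by
  obtain ⟨k, hpd, hsupp, hconv⟩ := hA
  obtain ⟨N, hN⟩ := hconv R hR δ hδ
  obtain ⟨r, hr⟩ := hsupp (N + 1)
  refine ⟨symmPart (k (N + 1)), (hpd _).symmPart, fun x y => by simp only [symmPart, add_comm],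
    ⟨r, fun x y hxy => ?_⟩, fun x y hxy => ?_⟩
  · simp [symmPart, hr x y hxy, hr y x (by rwa [dist_comm])]
  · have h₁ := hN (N + 1) N.lt_succ_self x y hxy
    have h₂ := hN (N + 1) N.lt_succ_self y x (by rwa [dist_comm])
    simp only [symmPart]
    constructor <;> linarith [h₁.1, h₁.2, h₂.1, h₂.2]

theorem exists_kernelNormLE_one_sub_mul (hbg : BoundedGeometry X) {T : L2 X →L[ℂ] L2 X}
    (hT : T ∈ UniformRoeAlgebra X) {ε : ℝ} (hε : 0 < ε) :
    ∃ R > 0, ∃ δ > 0, ∀ k : X → X → ℝ, IsPosDefKernel k → (∀ x y, k x y = k y x) →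
      (∀ x y, dist x y < R → 1 - δ ≤ k x y ∧ k x y ≤ 1) →
      KernelNormLE (fun x y => (1 - k x y) * matrixEntry T x y) ε := by
  obtain ⟨S, ⟨R, hR, hSR⟩, hTS⟩ := Metric.mem_closure_iff.1 hT (ε / 4) (by positivity)
  obtain ⟨N, hN⟩ := hbg.exists_ncard_closedBall_le R
  set δ := ε / (2 * (N + 1) * (‖S‖ + 1))
  have hδ : 0 < δ := by positivity
  refine ⟨R + 1, by linarith, δ, hδ, fun k hk hsymm hnear => ?_⟩
  have hdiag : ∀ x, k x x ≤ 1 := fun x => (hnear x x (by rw [dist_self]; linarith)).2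
  have hE : KernelNormLE (matrixEntry (T - S)) (ε / 4) :=
    (kernelNormLE_matrixEntry _).mono (by rw [← dist_eq_norm]; exact hTS.le)
  have hS : KernelNormLE (fun x y => (1 - k x y) * matrixEntry S x y) (N * (δ * ‖S‖)) := by
    refine kernelNormLE_of_propagation hN (by positivity)
      (fun x y hxy => by simp [hSR x y hxy]) fun x y => ?_
    by_cases hxy : dist x y ≤ R
    · obtain ⟨h₁, h₂⟩ := hnear x y (by linarith)
      have hk1 : ‖(1 : ℂ) - k x y‖ ≤ δ := by
        rw [← Complex.ofReal_one, ← Complex.ofReal_sub, Complex.norm_real, Real.norm_eq_abs,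
          abs_le]
        constructor <;> linarith
      rw [norm_mul]
      exact mul_le_mul hk1 (norm_matrixEntry_le S x y) (norm_nonneg _) hδ.le
    · simp only [hSR x y (not_le.1 hxy), mul_zero, norm_zero]
      positivity
  have hdecomp : (fun x y => (1 - k x y) * matrixEntry T x y) =
      (fun x y => (1 - k x y) * matrixEntry S x y) +
        (matrixEntry (T - S) - fun x y => k x y * matrixEntry (T - S) x y) := by
    ext x y
    simp only [matrixEntry_sub, Pi.add_apply, Pi.sub_apply]
    ring
  rw [hdecomp]
  refine (hS.add (hE.sub (hE.schurMul hk hsymm hdiag (by positivity)))).mono ?_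
  have hδε : δ * (2 * (N + 1) * (‖S‖ + 1)) = ε := div_mul_cancel₀ _ (by positivity)
  have hNS : (N : ℝ) * ‖S‖ ≤ (N + 1) * (‖S‖ + 1) := by nlinarith [norm_nonneg S]
  nlinarith

theorem exists_kernelNormLE_offBlock_mul_of_isGhost (hbg : BoundedGeometry X) {k : X → X → ℝ}
    {r : ℝ} (hk : ∀ x y, |k x y| ≤ 1) (hr : ∀ x y, r < dist x y → k x y = 0)
    {T : L2 X →L[ℂ] L2 X} (hT : IsGhost T) {ε : ℝ} (hε : 0 < ε) :
    ∃ G : Finset X, KernelNormLE (offBlock G fun x y => k x y * matrixEntry T x y) ε := by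
  obtain ⟨N, hN⟩ := hbg.exists_ncard_closedBall_le r
  obtain ⟨G, hG⟩ := hT (ε / (N + 1)) (by positivity)
  refine ⟨G, (kernelNormLE_of_propagation hN (c := ε / (N + 1)) (by positivity)
    (fun x y hxy => ?_) fun x y => ?_).mono ?_⟩
  · simp [offBlock, hr x y hxy]
  · by_cases h : x ∈ G ∧ y ∈ G
    · simp only [offBlock, h, and_self, if_true, norm_zero]
      positivity
    · simp only [offBlock, h, if_false, norm_mul, Complex.norm_real, Real.norm_eq_abs]
      calc |k x y| * ‖matrixEntry T x y‖ ≤ 1 * (ε / (N + 1)) :=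
            mul_le_mul (hk x y) (hG x y (by tauto)).le (norm_nonneg _) zero_le_one
        _ = ε / (N + 1) := one_mul _
  · rw [← mul_div_assoc, div_le_iff₀ (by positivity)]
    nlinarith

theorem exists_isCompactOperator_norm_sub_le (hbg : BoundedGeometry X) (hA : PropertyA X)
    {T : L2 X →L[ℂ] L2 X} (hT : T ∈ UniformRoeAlgebra X) (hg : IsGhost T) {ε : ℝ}
    (hε : 0 < ε) : ∃ C : L2 X →L[ℂ] L2 X, IsCompactOperator C ∧ ‖T - C‖ ≤ ε := by
  obtain ⟨R, hR, δ, hδ, happrox⟩ :=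
    exists_kernelNormLE_one_sub_mul hbg hT (ε := ε / 4) (by positivity)
  obtain ⟨k, hpd, hsymm, ⟨r, hr⟩, hnear⟩ := hA.exists_kernel hR hδ
  have hdiag : ∀ x, k x x ≤ 1 := fun x => (hnear x x (by rwa [dist_self])).2
  obtain ⟨G, hG⟩ := exists_kernelNormLE_offBlock_mul_of_isGhost hbg
    (hpd.abs_le_one hsymm hdiag) hr hg (ε := ε / 2) (by positivity)
  refine ⟨coordProj G ∘L T ∘L coordProj G, ?_, opNorm_le_of_kernelNormLE ?_ hε.le⟩
  · rw [ContinuousLinearMap.coe_comp]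
    exact (isCompactOperator_coordProj G).comp_clm _
  · have hsplit : matrixEntry T =
        (fun x y => (1 - k x y) * matrixEntry T x y) + fun x y => k x y * matrixEntry T x y := by
      ext x y
      simp only [Pi.add_apply]
      ring
    rw [matrixEntry_sub_coordProj_comp, hsplit, offBlock_add]
    exact (((happrox k hpd hsymm hnear).offBlock (by positivity) G).add hG).mono (by linarith)

end PropertyA

end

/-- On a bounded geometry space with property A, all ghost operators in the uniform Roe
algebra are compact. -/
theorem ghosts_compact_of_propertyA (X : Type*) [MetricSpace X] (hbg : BoundedGeometry X)
    (hA : PropertyA X) :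
    ∀ T : L2 X →L[ℂ] L2 X, T ∈ UniformRoeAlgebra X → IsGhost T → IsCompactOperator ⇑T := by
  intro T hT hg
  refine isClosed_setOfPred_isCompactOperator.closure_subset
    (Metric.mem_closure_iff.2 fun ε hε => ?_)
  obtain ⟨C, hC, hTC⟩ := exists_isCompactOperator_norm_sub_le hbg hA hT hg (half_pos hε)
  exact ⟨C, hC, by rw [dist_eq_norm]; linarith⟩
end
end

section
/- No weak expander has property A. -/
/-!
Formalization of statements from "Ghostbusting and property A" (Roe–Willett).
`L2 X` is ℓ²(X) with complex coefficients, `diracDelta x` the Dirac basis vector δ_x,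
`matrixEntry T x y = ⟨δ_x, T δ_y⟩`.
-/

noncomputable section

open Metric Set

/-- A presentation of `X` as the disjoint union `⊔ₙ Xₙ` of a sequence of nonempty
finite pieces, with `d(Xₙ, Xₘ) > diam Xₙ + diam Xₘ` for `n ≠ m`. -/
structure BoxSpaceStructure (X : Type*) [MetricSpace X] where
  piece : ℕ → Set X
  nonempty : ∀ n, (piece n).Nonempty
  finite : ∀ n, (piece n).Finite
  pairwise_disjoint : ∀ m n, m ≠ n → Disjoint (piece m) (piece n)
  covers : ∀ x : X, ∃ n, x ∈ piece n
  separated : ∀ m n, m ≠ n → ∀ x ∈ piece m, ∀ y ∈ piece n,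
    Metric.diam (piece m) + Metric.diam (piece n) < dist x y

/-- `X = ⊔ₙ Xₙ` is a weak expander: there are `c, R > 0` such that for every `S > 0`,
for all sufficiently large `n`, every `φ : Xₙ → ℝ` supported in a ball of radius `S`
satisfies `Σ_{(x,y) ∈ Eₙ^R} |φ(x) - φ(y)| ≥ c Σ_{x ∈ Xₙ} |φ(x)|`. -/
def IsWeakExpander {X : Type*} [MetricSpace X] (B : BoxSpaceStructure X) : Prop :=
  ∃ c : ℝ, 0 < c ∧ ∃ R : ℝ, 0 < R ∧ ∀ S : ℝ, 0 < S → ∃ N : ℕ, ∀ n, N ≤ n →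
    ∀ φ : X → ℝ, Function.support φ ⊆ B.piece n →
      (∃ z : X, Function.support φ ⊆ Metric.closedBall z S) →
      c * (∑' x : B.piece n, |φ x|) ≤
        ∑' p : {q : X × X // q.1 ∈ B.piece n ∧ q.2 ∈ B.piece n ∧ dist q.1 q.2 ≤ R},
          |φ p.1.1 - φ p.1.2|

/-!
Suppose `X` had property A. Fix a kernel `k` of propagation `r` with `k ≥ 1 - ε` on pairs at
distance at most `R` and `k ≤ 1` on the diagonal. On a piece `Xₙ` its symmetrisation `A` is a
positive semidefinite matrix whose norm is bounded by `Λ`, the number of points in an `r`-ball.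
Let `M = q(A)`, where `q` is a polynomial with `|q(t)² - t| ≤ ε` on `[0, Λ]`; so `M ≈ A^{1/2}`,
but `M` has propagation at most `deg q · r`, uniformly in `n`. The columns `η_z` of `M` satisfy
`‖η_z‖² ≈ A z z ≈ 1` and `‖η_x - η_y‖² ≈ A x x + A y y - 2 A x y = O(ε)` when `d(x, y) ≤ R`.
Apply the weak expander inequality to each `φ_z = η_z²` and sum over `z`: the left side is about
`c · |Xₙ|`, while by Cauchy–Schwarz the right side is `O(√ε)` times the number of `R`-edges,
which bounded geometry makes `O(|Xₙ|)`. This is a contradiction for small `ε`.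
-/

open Polynomial Finset
open scoped MatrixOrder

theorem exists_polynomial_abs_eval_sq_sub_le (Λ : ℝ) {ε : ℝ} (hε : 0 < ε) :
    ∃ q : ℝ[X], ∀ t ∈ Set.Icc 0 Λ, |q.eval t ^ 2 - t| ≤ ε := by
  set θ := min 1 (ε / (2 * √Λ + 1))
  obtain ⟨q, hq⟩ := exists_polynomial_near_of_continuousOn 0 Λ Real.sqrt
    Real.continuous_sqrt.continuousOn θ (lt_min one_pos (by positivity))
  refine ⟨q, fun t ht => ?_⟩
  have hdiff : |q.eval t - √t| ≤ θ := (hq t ht).le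
  have hsum : |q.eval t + √t| ≤ 2 * √Λ + 1 := by
    have := abs_add_le (q.eval t - √t) (2 * √t)
    rw [abs_of_nonneg (by positivity : (0 : ℝ) ≤ 2 * √t), sub_add_eq_add_sub,
      add_sub_assoc, two_mul, add_sub_cancel_right] at this
    linarith [Real.sqrt_le_sqrt ht.2, min_le_left 1 (ε / (2 * √Λ + 1))]
  calc |q.eval t ^ 2 - t| = |q.eval t - √t| * |q.eval t + √t| := by
        rw [← abs_mul]; congr 1; ring_nf; rw [Real.sq_sqrt ht.1]
    _ ≤ θ * (2 * √Λ + 1) := mul_le_mul hdiff hsum (abs_nonneg _) (by positivity)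
    _ ≤ ε := (le_div_iff₀ (by positivity)).1 (min_le_right _ _)

section FunctionalCalculus
variable {A : Type*} [TopologicalSpace A] [Ring A] [StarRing A] [Algebra ℝ A]
  [ContinuousFunctionalCalculus ℝ A IsSelfAdjoint]

theorem IsSelfAdjoint.aeval {a : A} (ha : IsSelfAdjoint a) (q : ℝ[X]) :
    IsSelfAdjoint (aeval a q) :=
  cfc_polynomial q a ▸ cfc_predicate _ a

variable [PartialOrder A] [StarOrderedRing A] [NonnegSpectrumClass ℝ A]

theorem aeval_sq_mem_Icc_of_abs_eval_sq_sub_le {a : A} {Λ ε : ℝ} {q : ℝ[X]} (h0 : 0 ≤ a)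
    (hΛ : a ≤ algebraMap ℝ A Λ) (hq : ∀ t ∈ Set.Icc 0 Λ, |q.eval t ^ 2 - t| ≤ ε) :
    aeval a q ^ 2 ∈ Set.Icc (a - algebraMap ℝ A ε) (a + algebraMap ℝ A ε) := by
  have ha : IsSelfAdjoint a := .of_nonneg h0
  have hspec : ∀ t ∈ spectrum ℝ a, |q.eval t ^ 2 - t| ≤ ε := fun t ht =>
    hq t ⟨(StarOrderedRing.nonneg_iff_spectrum_nonneg a).1 h0 t ht,
      (le_algebraMap_iff_spectrum_le).1 hΛ t ht⟩
  have hsq : aeval a q ^ 2 = cfc (fun t => q.eval t ^ 2) a := by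
    rw [cfc_pow .., cfc_polynomial q a]
  have hlo : a - algebraMap ℝ A ε = cfc (fun t => t - ε) a := by
    rw [cfc_sub .., cfc_id' .., cfc_const ..]
  have hhi : a + algebraMap ℝ A ε = cfc (fun t => t + ε) a := by
    rw [cfc_add .., cfc_id' .., cfc_const ..]
  rw [hsq, hlo, hhi]
  exact ⟨cfc_mono fun t ht => by linarith [(abs_le.1 (hspec t ht)).1],
    cfc_mono fun t ht => by linarith [(abs_le.1 (hspec t ht)).2]⟩

end FunctionalCalculus

namespace Matrix

section Propagation
variable {ι R : Type*} [MetricSpace ι]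

def HasPropagationLE [Zero R] (A : Matrix ι ι R) (r : ℝ) : Prop :=
  ∀ x y, r < dist x y → A x y = 0

variable [CommSemiring R] {A B : Matrix ι ι R} {r s : ℝ}

theorem HasPropagationLE.mono (hA : A.HasPropagationLE r) (h : r ≤ s) : A.HasPropagationLE s :=
  fun x y hxy => hA x y (h.trans_lt hxy)

theorem hasPropagationLE_one [DecidableEq ι] : (1 : Matrix ι ι R).HasPropagationLE 0 :=
  fun _ _ hxy => one_apply_ne (dist_pos.1 hxy)

variable [Fintype ι]

theorem HasPropagationLE.mul (hA : A.HasPropagationLE r) (hB : B.HasPropagationLE s) :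
    (A * B).HasPropagationLE (r + s) := by
  intro x y hxy
  rw [mul_apply]
  refine Finset.sum_eq_zero fun z _ => ?_
  rcases lt_or_ge r (dist x z) with h | h
  · rw [hA x z h, zero_mul]
  · rw [hB z y (by linarith [dist_triangle x z y]), mul_zero]

theorem HasPropagationLE.pow [DecidableEq ι] (hA : A.HasPropagationLE r) (j : ℕ) :
    (A ^ j).HasPropagationLE (j * r) := by
  induction j with
  | zero => simpa using hasPropagationLE_one
  | succ j ih => simpa [pow_succ, add_mul] using ih.mul hA

theorem HasPropagationLE.aeval [DecidableEq ι] (hA : A.HasPropagationLE r) (hr : 0 ≤ r)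
    (p : R[X]) : (aeval A p).HasPropagationLE (p.natDegree * r) := by
  intro x y hxy
  rw [aeval_eq_sum_range, sum_apply]
  refine Finset.sum_eq_zero fun i hi => ?_
  have hi : (i : ℝ) * r ≤ p.natDegree * r := by
    gcongr
    exact_mod_cast Nat.lt_succ_iff.1 (Finset.mem_range.1 hi)
  rw [smul_apply, hA.pow i x y (hi.trans_lt hxy), smul_zero]

end Propagation

variable {ι : Type*} {A B M : Matrix ι ι ℝ}

theorem apply_self_le_of_le (h : A ≤ B) (x : ι) : A x x ≤ B x x := by
  simpa using (le_iff.1 h).diag_nonneg (i := x)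

variable [Fintype ι]

theorem PosSemidef.abs_apply_add_apply_le (hA : A.PosSemidef) (x y : ι) :
    |A x y + A y x| ≤ A x x + A y y := by
  classical
  have key : ∀ s : ℝ, 0 ≤ A x x + s * (A x y + A y x) + s ^ 2 * A y y := fun s => by
    have := hA.dotProduct_mulVec_nonneg (Pi.single x 1 + s • Pi.single y 1)
    simp [mulVec, dotProduct, Pi.single_apply, add_mul, mul_add, Finset.sum_add_distrib] at this
    linarith
  rw [abs_le]
  constructor <;> linarith [key 1, key (-1)]

theorem apply_add_apply_sub_le_of_le (h : A ≤ B) (x y : ι) :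
    A x x + A y y - (A x y + A y x) ≤ B x x + B y y - (B x y + B y x) := by
  have := (le_iff.1 h).abs_apply_add_apply_le x y
  simp only [sub_apply] at this
  linarith [le_abs_self (B x y - A x y + (B y x - A y x))]

section Schur
variable [MetricSpace ι] {r : ℝ} {Λ : ℕ}

theorem dotProduct_mulVec_le_of_hasPropagationLE (hA : A.HasPropagationLE r)
    (h1 : ∀ x y, |A x y| ≤ 1) (hΛ : ∀ x : ι, #{y | dist x y ≤ r} ≤ Λ) (v : ι → ℝ) :
    v ⬝ᵥ A *ᵥ v ≤ Λ * (v ⬝ᵥ v) := by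
  have hrow : ∀ x, ∑ y, (if dist x y ≤ r then v x ^ 2 else 0) ≤ Λ * v x ^ 2 := fun x => by
    rw [← Finset.sum_filter, Finset.sum_const, nsmul_eq_mul]
    gcongr
    exact_mod_cast hΛ x
  calc v ⬝ᵥ A *ᵥ v = ∑ x, ∑ y, v x * A x y * v y := by
        simp [dotProduct, mulVec, Finset.mul_sum, mul_assoc]
    _ ≤ ∑ x, ∑ y, ((if dist x y ≤ r then v x ^ 2 else 0) +
          (if dist y x ≤ r then v y ^ 2 else 0)) / 2 := by
        gcongr with x _ y _
        rw [dist_comm y x]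
        split_ifs with h
        · nlinarith [sq_nonneg (v x - v y), sq_nonneg (v x + v y), abs_le.1 (h1 x y)]
        · simp [hA x y (not_le.1 h)]
    _ = ∑ x, ∑ y, (if dist x y ≤ r then v x ^ 2 else 0) := by
        simp only [add_div, Finset.sum_add_distrib]
        rw [Finset.sum_comm (f := fun x y => (if dist y x ≤ r then v y ^ 2 else 0) / 2)]
        simp only [← Finset.sum_add_distrib, add_halves]
    _ ≤ ∑ x, Λ * v x ^ 2 := Finset.sum_le_sum fun x _ => hrow x
    _ = Λ * (v ⬝ᵥ v) := by simp [dotProduct, Finset.mul_sum, sq]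

theorem le_algebraMap_of_hasPropagationLE [DecidableEq ι] (hA : A.IsHermitian)
    (hr : A.HasPropagationLE r) (h1 : ∀ x y, |A x y| ≤ 1)
    (hΛ : ∀ x : ι, #{y | dist x y ≤ r} ≤ Λ) : A ≤ algebraMap ℝ _ (Λ : ℝ) := by
  rw [le_iff]
  refine PosSemidef.of_dotProduct_mulVec_nonneg
    ((isHermitian_diagonal_of_self_adjoint _ (by simp)).sub hA) fun v => ?_
  have := dotProduct_mulVec_le_of_hasPropagationLE hr h1 hΛ v
  simp only [star_trivial, sub_mulVec, dotProduct_sub, algebraMap_eq_diagonal]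
  simp only [dotProduct, mulVec_diagonal, Finset.mul_sum, Pi.algebraMap_apply,
    Algebra.algebraMap_self, RingHom.id_apply] at this ⊢
  linarith [show ∑ x, v x * ((Λ : ℝ) * v x) = ∑ x, (Λ : ℝ) * (v x * v x) from
    Finset.sum_congr rfl fun x _ => mul_left_comm _ _ _]

end Schur

section Gram
variable [DecidableEq ι] {ε : ℝ}

theorem IsHermitian.sq_apply (hM : M.IsHermitian) (x y : ι) :
    (M ^ 2) x y = ∑ z, M x z * M y z := by
  rw [sq, mul_apply]
  refine Finset.sum_congr rfl fun z _ => ?_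
  rw [← hM.apply y z, star_trivial]

theorem IsHermitian.sum_apply_sq (hM : M.IsHermitian) (z : ι) :
    ∑ x, M x z ^ 2 = (M ^ 2) z z := by
  rw [hM.sq_apply]
  refine Finset.sum_congr rfl fun x _ => ?_
  rw [sq, ← hM.apply x z, star_trivial]

theorem IsHermitian.sub_le_sum_apply_sq (hM : M.IsHermitian)
    (h : A - algebraMap ℝ _ ε ≤ M ^ 2) (z : ι) : A z z - ε ≤ ∑ x, M x z ^ 2 := by
  simpa [hM.sum_apply_sq, algebraMap_eq_diagonal] using apply_self_le_of_le h z

theorem IsHermitian.sum_abs_sq_sub_sq_le (hM : M.IsHermitian)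
    (h : M ^ 2 ≤ A + algebraMap ℝ _ ε) (hdiag : ∀ x, A x x ≤ 1) {x y : ι}
    (hxy : 1 - ε ≤ A x y) (hyx : 1 - ε ≤ A y x) (hε : ε ≤ 1 / 4) :
    ∑ z, |M x z ^ 2 - M y z ^ 2| ≤ √(20 * ε) := by
  rcases eq_or_ne x y with rfl | hne
  · simp
  have hrow : ∀ x, ∑ z, M x z ^ 2 ≤ 1 + ε := fun x => by
    have := apply_self_le_of_le h x
    simp only [hM.sq_apply, add_apply, algebraMap_matrix_apply, Algebra.algebraMap_self,
      RingHom.id_apply, ite_true, ← sq] at this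
    linarith [hdiag x]
  have hdiff : ∑ z, (M x z - M y z) ^ 2 ≤ 4 * ε := by
    have := apply_add_apply_sub_le_of_le h x y
    simp only [hM.sq_apply, add_apply, algebraMap_matrix_apply, Algebra.algebraMap_self,
      RingHom.id_apply, ite_true, if_neg hne, if_neg hne.symm] at this
    have e : ∑ z, (M x z - M y z) ^ 2 = ∑ z, M x z * M x z + ∑ z, M y z * M y z -
        (∑ z, M x z * M y z + ∑ z, M y z * M x z) := by
      rw [← Finset.sum_add_distrib, ← Finset.sum_add_distrib, ← Finset.sum_sub_distrib]
      exact Finset.sum_congr rfl fun z _ => by ring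
    linarith [hdiag x, hdiag y]
  have hsum : ∑ z, (M x z + M y z) ^ 2 ≤ 5 := by
    have : ∑ z, (M x z + M y z) ^ 2 ≤ ∑ z, (2 * M x z ^ 2 + 2 * M y z ^ 2) :=
      Finset.sum_le_sum fun z _ => by nlinarith [sq_nonneg (M x z - M y z)]
    rw [Finset.sum_add_distrib, ← Finset.mul_sum, ← Finset.mul_sum] at this
    linarith [hrow x, hrow y]
  calc ∑ z, |M x z ^ 2 - M y z ^ 2| = ∑ z, |M x z + M y z| * |M x z - M y z| := by
        simp_rw [sq_sub_sq, abs_mul]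
    _ ≤ √(∑ z, |M x z + M y z| ^ 2) * √(∑ z, |M x z - M y z| ^ 2) :=
        Real.sum_mul_le_sqrt_mul_sqrt _ _ _
    _ ≤ √5 * √(4 * ε) := by simp only [sq_abs]; gcongr
    _ = √(20 * ε) := by rw [← Real.sqrt_mul (by norm_num)]; ring_nf

end Gram

end Matrix
section LocalExpander
variable {ι : Type*} [MetricSpace ι] [Fintype ι]

def IsLocalExpander (ι : Type*) [MetricSpace ι] [Fintype ι] (c R S : ℝ) : Prop :=
  ∀ (ψ : ι → ℝ) (z : ι), (∀ x, S < dist x z → ψ x = 0) →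
    c * ∑ x, |ψ x| ≤ ∑ p : ι × ι with dist p.1 p.2 ≤ R, |ψ p.1 - ψ p.2|

theorem card_filter_dist_le_le {R : ℝ} {m : ℕ} (hm : ∀ x : ι, #{y | dist x y ≤ R} ≤ m) :
    #{p : ι × ι | dist p.1 p.2 ≤ R} ≤ Fintype.card ι * m := by
  calc #{p : ι × ι | dist p.1 p.2 ≤ R} = ∑ x : ι, #{y | dist x y ≤ R} := by
        simp only [Finset.card_filter, Fintype.sum_prod_type]
    _ ≤ ∑ _x : ι, m := Finset.sum_le_sum fun x _ => hm x
    _ = Fintype.card ι * m := by simp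

theorem IsLocalExpander.mul_le [Nonempty ι] {c R S a b : ℝ} {m : ℕ}
    (h : IsLocalExpander ι c R S) (hc : 0 ≤ c) (hb : 0 ≤ b)
    (hm : ∀ x : ι, #{y | dist x y ≤ R} ≤ m) (ψ : ι → ι → ℝ)
    (hψ : ∀ z x, S < dist x z → ψ z x = 0) (hmass : ∀ z, a ≤ ∑ x, |ψ z x|)
    (hedge : ∀ x y, dist x y ≤ R → ∑ z, |ψ z x - ψ z y| ≤ b) :
    c * a ≤ m * b := by
  have hcard : (0 : ℝ) < Fintype.card ι := by exact_mod_cast Fintype.card_pos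
  refine le_of_mul_le_mul_left ?_ hcard
  calc Fintype.card ι * (c * a) = ∑ _z : ι, c * a := by simp
    _ ≤ ∑ z, c * ∑ x, |ψ z x| :=
        Finset.sum_le_sum fun z _ => mul_le_mul_of_nonneg_left (hmass z) hc
    _ ≤ ∑ z, ∑ p : ι × ι with dist p.1 p.2 ≤ R, |ψ z p.1 - ψ z p.2| :=
        Finset.sum_le_sum fun z _ => h (ψ z) z (hψ z)
    _ = ∑ p : ι × ι with dist p.1 p.2 ≤ R, ∑ z, |ψ z p.1 - ψ z p.2| := Finset.sum_comm
    _ ≤ ∑ _p : ι × ι with dist _p.1 _p.2 ≤ R, b :=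
        Finset.sum_le_sum fun p hp => hedge _ _ (Finset.mem_filter.1 hp).2
    _ ≤ (Fintype.card ι * m) * b := by
        rw [Finset.sum_const, nsmul_eq_mul]
        gcongr
        exact_mod_cast card_filter_dist_le_le hm
    _ = Fintype.card ι * (m * b) := by ring

end LocalExpander

theorem BoundedGeometry.exists_card_le {X : Type*} [MetricSpace X] (h : BoundedGeometry X)
    {R : ℝ} (hR : 0 < R) :
    ∃ m : ℕ, ∀ (s : Set X) [Fintype s] (x : s), #{y : s | dist x y ≤ R} ≤ m := by
  classical
  obtain ⟨m, hm⟩ := h R hR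
  refine ⟨m, fun s _ x => ?_⟩
  obtain ⟨hfin, hcard⟩ := hm x
  calc #{y : s | dist x y ≤ R}
      = (({y : s | dist x y ≤ R} : Finset s).map (Function.Embedding.subtype _) : Set X).ncard := by
        rw [Set.ncard_coe_finset, Finset.card_map]
    _ ≤ (Metric.closedBall (x : X) R).ncard := by
        refine Set.ncard_le_ncard (fun y hy => ?_) hfin
        simp only [Finset.coe_map, Set.mem_image, Finset.mem_coe, Finset.mem_filter] at hy
        obtain ⟨y, ⟨-, hy⟩, rfl⟩ := hy
        rw [Metric.mem_closedBall, dist_comm]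
        exact hy
    _ ≤ m := hcard

namespace BoxSpaceStructure
variable {X : Type*} [MetricSpace X] (B : BoxSpaceStructure X) (n : ℕ)

noncomputable instance instFintypePiece : Fintype (B.piece n) := (B.finite n).fintype

instance instNonemptyPiece : Nonempty (B.piece n) := (B.nonempty n).to_subtype

end BoxSpaceStructure

theorem IsWeakExpander.exists_isLocalExpander {X : Type*} [MetricSpace X]
    {B : BoxSpaceStructure X} (h : IsWeakExpander B) :
    ∃ c > 0, ∃ R > 0, ∀ S > 0, ∃ N, ∀ n ≥ N, IsLocalExpander (B.piece n) c R S := by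
  classical
  obtain ⟨c, hc, R, hR, hS⟩ := h
  refine ⟨c, hc, R, hR, fun S hSpos => ?_⟩
  obtain ⟨N, hN⟩ := hS S hSpos
  refine ⟨N, fun n hn ψ z hψ => ?_⟩
  let φ : X → ℝ := fun x => if hx : x ∈ B.piece n then ψ ⟨x, hx⟩ else 0
  have hφ : ∀ x : B.piece n, φ x = ψ x := fun x => dif_pos x.2
  have hsupp : Function.support φ ⊆ B.piece n := fun x hx => by
    by_contra h'
    exact hx (dif_neg h')
  have hball : Function.support φ ⊆ Metric.closedBall (z : X) S := fun x hx => by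
    by_contra h'
    exact hx ((hφ ⟨x, hsupp hx⟩).trans (hψ _ (not_le.1 h')))
  let e : {p : B.piece n × B.piece n // dist p.1 p.2 ≤ R} ≃
      {q : X × X // q.1 ∈ B.piece n ∧ q.2 ∈ B.piece n ∧ dist q.1 q.2 ≤ R} :=
    { toFun := fun p => ⟨(p.1.1, p.1.2), p.1.1.2, p.1.2.2, p.2⟩
      invFun := fun q => ⟨(⟨q.1.1, q.2.1⟩, ⟨q.1.2, q.2.2.1⟩), q.2.2.2⟩ }
  have := hN n hn φ hsupp ⟨z, hball⟩
  rw [tsum_fintype, ← e.tsum_eq, tsum_fintype] at this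
  simp only [hφ] at this
  refine this.trans_eq ((Finset.sum_subtype _ (fun p => ?_) _).trans
    (Finset.sum_congr rfl fun b _ => ?_)).symm
  · simp
  · rw [← hφ b.1.1, ← hφ b.1.2]
    rfl

section Kernel
variable {X ι : Type*}

theorem IsPosDefKernel.symmetrize {k : X → X → ℝ} (hk : IsPosDefKernel k) :
    IsPosDefKernel fun x y => (k x y + k y x) / 2 := fun s c => by
  have hswap : ∑ x ∈ s, ∑ y ∈ s, c x * c y * k y x = ∑ x ∈ s, ∑ y ∈ s, c x * c y * k x y := by
    rw [Finset.sum_comm]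
    exact Finset.sum_congr rfl fun _ _ => Finset.sum_congr rfl fun _ _ => by ring
  have hsplit : ∑ x ∈ s, ∑ y ∈ s, c x * c y * ((k x y + k y x) / 2) =
      (∑ x ∈ s, ∑ y ∈ s, c x * c y * k x y + ∑ x ∈ s, ∑ y ∈ s, c x * c y * k y x) / 2 := by
    simp only [Finset.sum_div, ← Finset.sum_add_distrib]
    exact Finset.sum_congr rfl fun _ _ => Finset.sum_congr rfl fun _ _ => by ring
  rw [hsplit, hswap]
  linarith [hk s c]

theorem IsPosDefKernel.comp {k : X → X → ℝ} (hk : IsPosDefKernel k) {f : ι → X}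
    (hf : Function.Injective f) : IsPosDefKernel fun i j => k (f i) (f j) := fun s c => by
  simpa [Finset.sum_map, hf.extend_apply] using hk (s.map ⟨f, hf⟩) (Function.extend f c 0)

theorem IsPosDefKernel.posSemidef [Fintype ι] {K : ι → ι → ℝ} (hK : IsPosDefKernel K)
    (hsymm : ∀ i j, K i j = K j i) : (Matrix.of K).PosSemidef := by
  refine Matrix.PosSemidef.of_dotProduct_mulVec_nonneg
    (Matrix.IsHermitian.ext fun i j => by simp [hsymm]) fun v => ?_
  simpa [dotProduct, Matrix.mulVec, Finset.mul_sum, mul_assoc, mul_comm, mul_left_comm]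
    using hK Finset.univ v

end Kernel

theorem PropertyA.exists_symmetric_kernel {X : Type*} [MetricSpace X] (h : PropertyA X)
    {s ε : ℝ} (hs : 0 < s) (hε : 0 < ε) :
    ∃ K : X → X → ℝ, IsPosDefKernel K ∧ (∀ x y, K x y = K y x) ∧
      (∃ r > 0, ∀ x y, r < dist x y → K x y = 0) ∧
      ∀ x y, dist x y < s → 1 - ε ≤ K x y ∧ K x y ≤ 1 := by
  obtain ⟨k, hpd, hsupp, hconv⟩ := h
  obtain ⟨N, hN⟩ := hconv s hs ε hε
  obtain ⟨r, hr⟩ := hsupp (N + 1)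
  refine ⟨fun x y => (k (N + 1) x y + k (N + 1) y x) / 2, (hpd (N + 1)).symmetrize,
    fun x y => by simp only [add_comm], ⟨max r 1, lt_max_of_lt_right one_pos, fun x y hxy => ?_⟩,
    fun x y hxy => ?_⟩
  · have hxy : r < dist x y := (le_max_left r 1).trans_lt hxy
    simp [hr x y hxy, hr y x (dist_comm x y ▸ hxy)]
  · have h₁ := hN (N + 1) N.lt_succ_self x y hxy
    have h₂ := hN (N + 1) N.lt_succ_self y x (dist_comm x y ▸ hxy)
    constructor <;> linarith [h₁.1, h₁.2, h₂.1, h₂.2]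

theorem IsLocalExpander.mul_one_sub_two_mul_le {ι : Type*} [MetricSpace ι] [Fintype ι]
    [Nonempty ι] [DecidableEq ι] {c R S r ε : ℝ} {m Λ : ℕ} {q : ℝ[X]} {A : Matrix ι ι ℝ}
    (hexp : IsLocalExpander ι c R S) (hc : 0 ≤ c) (hR : 0 ≤ R)
    (hm : ∀ x : ι, #{y | dist x y ≤ R} ≤ m) (hA : A.PosSemidef) (hr : 0 ≤ r)
    (hprop : A.HasPropagationLE r) (hΛ : ∀ x : ι, #{y | dist x y ≤ r} ≤ Λ)
    (hdiag : ∀ x, A x x ≤ 1) (hnear : ∀ x y, dist x y ≤ R → 1 - ε ≤ A x y) (hε : ε ≤ 1 / 4)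
    (hq : ∀ t ∈ Set.Icc 0 (Λ : ℝ), |q.eval t ^ 2 - t| ≤ ε) (hS : q.natDegree * r ≤ S) :
    c * (1 - 2 * ε) ≤ m * √(20 * ε) := by
  have h1 : ∀ x y, |A x y| ≤ 1 := fun x y => by
    have := hA.abs_apply_add_apply_le x y
    rw [← hA.1.apply y x, star_trivial, ← two_mul, abs_mul, abs_two] at this
    linarith [hdiag x, hdiag y]
  have hM : (aeval A q).IsHermitian := IsSelfAdjoint.aeval hA.1 q
  have hAΛ : A ≤ algebraMap ℝ _ (Λ : ℝ) := Matrix.le_algebraMap_of_hasPropagationLE hA.1 hprop h1 hΛ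
  obtain ⟨hlo, hhi⟩ :=
    aeval_sq_mem_Icc_of_abs_eval_sq_sub_le (Matrix.nonneg_iff_posSemidef.2 hA) hAΛ hq
  -- The test functions are the squared columns of `q(A) ≈ A^{1/2}`.
  refine hexp.mul_le hc (Real.sqrt_nonneg _) hm (fun z x => aeval A q x z ^ 2)
    (fun z x hxz => ?_) (fun z => ?_) (fun x y hxy => ?_)
  · simp [(hprop.aeval hr q).mono hS x z hxz]
  · simp only [abs_sq]
    linarith [hM.sub_le_sum_apply_sq hlo z, hnear z z (by simpa using hR)]
  · exact hM.sum_abs_sq_sub_sq_le hhi hdiag (hnear x y hxy) (hnear y x (by rwa [dist_comm])) hε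

theorem exists_pos_le_quarter_mul_sqrt_lt {c : ℝ} (hc : 0 < c) (m : ℕ) :
    ∃ ε > 0, ε ≤ 1 / 4 ∧ m * √(20 * ε) < c * (1 - 2 * ε) := by
  set ε := min (1 / 4) ((c / (2 * (m + 1))) ^ 2 / 20)
  have hε : 0 < ε := lt_min (by norm_num) (by positivity)
  refine ⟨ε, hε, min_le_left _ _, ?_⟩
  have hsqrt : √(20 * ε) ≤ c / (2 * (m + 1)) := Real.sqrt_le_iff.2
    ⟨by positivity, by linarith [min_le_right (1 / 4 : ℝ) ((c / (2 * (m + 1))) ^ 2 / 20)]⟩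
  calc m * √(20 * ε) ≤ m * (c / (2 * (m + 1))) := by gcongr
    _ < c / 2 := by
        rw [mul_div_assoc', div_lt_div_iff₀ (by positivity) two_pos]
        nlinarith
    _ ≤ c * (1 - 2 * ε) := by nlinarith [min_le_left (1 / 4 : ℝ) ((c / (2 * (m + 1))) ^ 2 / 20)]

/-- No weak expander has property A. -/
theorem weak_expander_not_propertyA (X : Type*) [MetricSpace X] (hbg : BoundedGeometry X)
    (B : BoxSpaceStructure X) (hwe : IsWeakExpander B) : ¬ PropertyA X := by
  classical
  intro hA
  obtain ⟨c, hc, R, hR, hexp⟩ := hwe.exists_isLocalExpander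
  obtain ⟨m, hm⟩ := hbg.exists_card_le hR
  obtain ⟨ε, hε0, hε, hlt⟩ := exists_pos_le_quarter_mul_sqrt_lt hc m
  obtain ⟨K, hKpd, hKsymm, ⟨r, hr, hKr⟩, hK⟩ :=
    hA.exists_symmetric_kernel (by linarith : 0 < R + 1) hε0
  obtain ⟨Λ, hΛ⟩ := hbg.exists_card_le hr
  obtain ⟨q, hq⟩ := exists_polynomial_abs_eval_sq_sub_le Λ hε0
  -- The piece comes last: the radius `deg q * r` depends on `ε` and on the kernel.
  obtain ⟨n, hn⟩ := hexp (q.natDegree * r + 1) (by positivity)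
  exact hlt.not_ge <| (hn n le_rfl).mul_one_sub_two_mul_le
    (A := Matrix.of fun x y : B.piece n => K x y) hc.le hR.le (hm _)
    ((hKpd.comp Subtype.val_injective).posSemidef fun x y => hKsymm x y) hr.le
    (fun x y h => hKr x y h) (hΛ _) (fun x => (hK x x (by rw [dist_self]; linarith)).2)
    (fun x y h => (hK x y (h.trans_lt (lt_add_one R))).1) hε hq (by linarith)
end
end
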